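/- Let F_q be a finite field of characteristic p, let x_0,…,x_{n−1} ∈ F_q be n distinct elements, let J ⊆ {0,…,n−1} with |J| = k, and let r ≤ ℓ be positive integers. Suppose y ∈ F_q^n satisfies y_i = 0 for all i ∈ J, and suppose the polynomials Q_0(x),…,Q_ℓ(x) ∈ F_q[x] with deg Q_ν ≤ d_ν satisfy the GSA interpolation constraints for y. Then for every ν with 0 ≤ ν ≤ r−1: if ν ∈ R_0 there exists W_ν(x) ∈ F_q[x] with deg W_ν ≤ d_ν − k(r−ν) − (n−k)(r−g(ν)) such that Q_ν(x) = W_ν(x)·P_J(x)^{r−ν}·P_{I∖J}(x)^{r−g(ν)}, and if ν ∉ R_0 there exists U_ν(x) ∈ F_q[x] with deg U_ν ≤ d_ν − k(r−ν) such that Q_ν(x) = U_ν(x)·P_J(x)^{r−ν}, where I = {0,…,n−1}. -/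

import Mathlib

open Polynomial

/-- `f` has degree at most `d`, where `d` is an integer (so `d < 0` forces `f = 0`). -/
def DegLE {F : Type*} [Field F] (f : F[X]) (d : ℤ) : Prop :=
  ∀ μ : ℕ, d < (μ : ℤ) → f.coeff μ = 0

/-- The Guruswami–Sudan interpolation constraints: for all `i` and all `s, t` with
`s + t < r`, `Σ_{ν=t}^{ℓ} C(ν,t)·y_i^{ν−t}·Σ_{μ≥s} C(μ,s)·x_i^{μ−s}·Q_{ν,μ} = 0`,
the inner sum being the `s`-th Hasse derivative of `Q ν` evaluated at `x i`. -/
def GSAConstraints {F : Type*} [Field F] {n : ℕ} (x y : Fin n → F)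
    (r ℓ : ℕ) (Q : ℕ → F[X]) : Prop :=
  ∀ i : Fin n, ∀ s t : ℕ, s + t < r →
    ∑ ν ∈ Finset.Icc t ℓ,
      (Nat.choose ν t : F) * y i ^ (ν - t) *
        ((Polynomial.hasseDeriv s (Q ν)).eval (x i)) = 0

/-- `P_S(x) = ∏_{i ∈ S} (x − x_i)`. -/
noncomputable def Ppoly {F : Type*} [Field F] {n : ℕ} (x : Fin n → F)
    (S : Finset (Fin n)) : F[X] :=
  ∏ i ∈ S, (X - C (x i))

/-- The degree bound `d_ν = r(n−ε₀) − ν(k−1) − 1` (as an integer). -/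
def degBound (r n ε₀ k ν : ℕ) : ℤ :=
  (r : ℤ) * ((n : ℤ) - (ε₀ : ℤ)) - (ν : ℤ) * ((k : ℤ) - 1) - 1

/-- `t0` is a zero column of the mod-`p` Pascal triangle with respect to `ℓ`:
`C(ν, t0) ≡ 0 (mod p)` for all `ν = t0+1, …, ℓ`. -/
def ZeroColumn (p ℓ t0 : ℕ) : Prop :=
  ∀ ν : ℕ, t0 < ν → ν ≤ ℓ → p ∣ Nat.choose ν t0

/-- `ν` is a zero column with resolvable spoilers of the mod-`p` Pascal triangle with
respect to `r` and `ℓ`: `ν < r` and every spoiler `t` of `ν` (i.e. `ν < t ≤ ℓ` with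
`C(t,ν) ≢ 0 (mod p)`) is itself a zero column with resolvable spoilers.  A zero column
(with `t0 < r`) has no spoilers and is the base case of the recursion; if no zero column
exists, no column satisfies this predicate. -/
def ZCRS (p r ℓ : ℕ) (ν : ℕ) : Prop :=
  ν < r ∧ ∀ t, ν < t → t ≤ ℓ → ¬ (p ∣ Nat.choose t ν) → ZCRS p r ℓ t
termination_by ℓ - ν
decreasing_by omega

/-- The set `S_ν` of spoilers of column `ν`: those `t` with `ν < t ≤ ℓ` and
`C(t,ν) ≢ 0 (mod p)`. -/
def spoilerSet (p ℓ ν : ℕ) : Finset ℕ :=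
  (Finset.Icc (ν + 1) ℓ).filter fun t => ¬ (p ∣ Nat.choose t ν)

/-- `g(ν) = max S_ν` if `S_ν ≠ ∅`, and `g(ν) = ν` otherwise. -/
def gval (p ℓ ν : ℕ) : ℕ :=
  if h : (spoilerSet p ℓ ν).Nonempty then (spoilerSet p ℓ ν).max' h else ν


/-!
Where `y` vanishes, the constraint for `(s, ν)` reduces to its term `ν' = ν`, so the Hasse
derivatives of `Q ν` of order `< r - ν` vanish on `J` and `P_J^(r-ν) ∣ Q ν`. At any point, in
characteristic `p` the constraint for `(s, ν)` only involves the columns `ν` and its spoilers. For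
a zero column with resolvable spoilers the spoilers are again such columns, with no larger
`g`, so downward induction on `ν` shows that the Hasse derivatives of `Q ν` of order `< r - g(ν)`
vanish at every `x_i`, giving `P_{I∖J}^(r-g(ν)) ∣ Q ν`. Dividing by the monic prefactor lowers
the degree bound by its degree.
-/

section PascalTriangle

variable {p ℓ ν t : ℕ}

lemma mem_spoilerSet : t ∈ spoilerSet p ℓ ν ↔ ν < t ∧ t ≤ ℓ ∧ ¬ p ∣ t.choose ν := by
  simp [spoilerSet, and_assoc]

/-- `C(t',t)·C(t,ν) = C(t',ν)·C(t'-ν,t-ν)` and `p` divides neither factor on the left. -/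
lemma spoilerSet_subset_of_mem (hp : p.Prime) (ht : t ∈ spoilerSet p ℓ ν) :
    spoilerSet p ℓ t ⊆ spoilerSet p ℓ ν := by
  intro t' ht'
  obtain ⟨hνt, -, hν⟩ := mem_spoilerSet.mp ht
  obtain ⟨htt', ht'ℓ, ht⟩ := mem_spoilerSet.mp ht'
  refine mem_spoilerSet.mpr ⟨hνt.trans htt', ht'ℓ, fun hdvd => ?_⟩
  have : p ∣ t'.choose t * t.choose ν := by
    rw [Nat.choose_mul hνt.le]
    exact hdvd.mul_right _
  rcases hp.dvd_mul.mp this with h | h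
  exacts [ht h, hν h]

lemma le_gval (p ℓ ν : ℕ) : ν ≤ gval p ℓ ν := by
  unfold gval
  split_ifs with h
  · exact (mem_spoilerSet.mp (Finset.max'_mem _ h)).1.le
  · exact le_rfl

lemma gval_le_gval_of_mem_spoilerSet (hp : p.Prime) (ht : t ∈ spoilerSet p ℓ ν) :
    gval p ℓ t ≤ gval p ℓ ν := by
  have hν : (spoilerSet p ℓ ν).Nonempty := ⟨t, ht⟩
  rw [gval, gval, dif_pos hν]
  split_ifs with h
  · exact Finset.max'_subset h (spoilerSet_subset_of_mem hp ht)
  · exact Finset.le_max' _ _ ht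

variable {r : ℕ}

lemma ZCRS_iff : ZCRS p r ℓ ν ↔ ν < r ∧ ∀ t ∈ spoilerSet p ℓ ν, ZCRS p r ℓ t := by
  rw [ZCRS]
  simp only [mem_spoilerSet, and_imp]

lemma ZCRS.lt (h : ZCRS p r ℓ ν) : ν < r :=
  (ZCRS_iff.mp h).1

lemma ZCRS.of_mem_spoilerSet (h : ZCRS p r ℓ ν) (ht : t ∈ spoilerSet p ℓ ν) : ZCRS p r ℓ t :=
  (ZCRS_iff.mp h).2 t ht

lemma ZCRS.gval_lt (h : ZCRS p r ℓ ν) : gval p ℓ ν < r := by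
  unfold gval
  split_ifs with hne
  · exact (h.of_mem_spoilerSet (Finset.max'_mem _ hne)).lt
  · exact h.lt

end PascalTriangle

section Polynomials

variable {F : Type*} [Field F]

lemma degLE_iff {f : F[X]} {d : ℤ} : DegLE f d ↔ f = 0 ∨ (f.natDegree : ℤ) ≤ d := by
  refine ⟨fun hf => or_iff_not_imp_left.mpr fun hf0 => ?_, ?_⟩
  · by_contra! hd
    exact hf0 (leadingCoeff_eq_zero.mp (hf _ hd))
  · rintro (rfl | hd) μ hμ
    · exact coeff_zero μ
    · exact coeff_eq_zero_of_natDegree_lt (by omega)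

lemma DegLE.exists_eq_mul_of_dvd {f g : F[X]} {d : ℤ} (hf : DegLE f d) (hg : g.Monic)
    (hgf : g ∣ f) : ∃ W, DegLE W (d - g.natDegree) ∧ f = W * g := by
  obtain ⟨W, rfl⟩ := hgf
  refine ⟨W, degLE_iff.mpr ?_, mul_comm _ _⟩
  rcases eq_or_ne W 0 with hW | hW
  · exact .inl hW
  · rcases degLE_iff.mp hf with h | h
    · exact .inl (hg.mul_right_eq_zero_iff.mp h)
    · rw [hg.natDegree_mul' hW] at h
      exact .inr (by push_cast at h; omega)

lemma X_sub_C_pow_dvd_of_hasseDeriv_eval_eq_zero {R : Type*} [CommRing R] {f : R[X]} {a : R}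
    {m : ℕ} (h : ∀ s < m, (hasseDeriv s f).eval a = 0) : (X - C a) ^ m ∣ f := by
  rw [← sum_taylor_eq f a, Polynomial.sum]
  refine Finset.dvd_sum fun i hi => Dvd.dvd.mul_left (pow_dvd_pow _ ?_) _
  by_contra! him
  exact mem_support_iff.mp hi (by rw [taylor_coeff]; exact h i him)

variable {n : ℕ} {x : Fin n → F}

lemma Ppoly_monic (x : Fin n → F) (S : Finset (Fin n)) : (Ppoly x S).Monic :=
  monic_prod_of_monic _ _ fun i _ => monic_X_sub_C (x i)

lemma natDegree_Ppoly_pow (x : Fin n → F) (S : Finset (Fin n)) (m : ℕ) :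
    (Ppoly x S ^ m).natDegree = m * S.card := by
  rw [(Ppoly_monic x S).natDegree_pow, Ppoly, natDegree_finsetProd_X_sub_C_eq_card]

lemma isCoprime_Ppoly (hx : Function.Injective x) {S T : Finset (Fin n)} (hST : Disjoint S T) :
    IsCoprime (Ppoly x S) (Ppoly x T) :=
  IsCoprime.prod_left fun _ hi => IsCoprime.prod_right fun _ hj =>
    pairwise_coprime_X_sub_C hx (Finset.disjoint_left.mp hST hi |> ne_of_mem_of_not_mem hj).symm

lemma Ppoly_pow_dvd_of_hasseDeriv_eval_eq_zero (hx : Function.Injective x) {f : F[X]}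
    {S : Finset (Fin n)} {m : ℕ} (h : ∀ i ∈ S, ∀ s < m, (hasseDeriv s f).eval (x i) = 0) :
    Ppoly x S ^ m ∣ f := by
  rw [Ppoly, ← Finset.prod_pow]
  exact Finset.prod_dvd_of_coprime (fun i _ j _ hij => (pairwise_coprime_X_sub_C hx hij).pow)
    fun i hi => X_sub_C_pow_dvd_of_hasseDeriv_eval_eq_zero (h i hi)

end Polynomials

namespace GSAConstraints

variable {F : Type*} [Field F] {n : ℕ} {x y : Fin n → F} {r ℓ : ℕ} {Q : ℕ → F[X]}

lemma hasseDeriv_eval_eq_zero_of_terms_eq_zero (hGSA : GSAConstraints x y r ℓ Q) {i : Fin n}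
    {s ν : ℕ} (hνℓ : ν ≤ ℓ) (hs : s + ν < r)
    (h : ∀ ν' ∈ Finset.Ioc ν ℓ,
      (ν'.choose ν : F) * y i ^ (ν' - ν) * (hasseDeriv s (Q ν')).eval (x i) = 0) :
    (hasseDeriv s (Q ν)).eval (x i) = 0 := by
  have hsum := hGSA i s ν hs
  rwa [Finset.sum_eq_single_of_mem ν (Finset.mem_Icc.mpr ⟨le_rfl, hνℓ⟩) fun ν' hν' hne =>
      h ν' (by rw [Finset.mem_Icc] at hν'; exact Finset.mem_Ioc.mpr ⟨by omega, hν'.2⟩),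
    Nat.choose_self, Nat.cast_one, Nat.sub_self, pow_zero, one_mul, one_mul] at hsum

lemma hasseDeriv_eval_eq_zero_of_eq_zero (hGSA : GSAConstraints x y r ℓ Q) {i : Fin n}
    (hyi : y i = 0) {s ν : ℕ} (hνℓ : ν ≤ ℓ) (hs : s + ν < r) :
    (hasseDeriv s (Q ν)).eval (x i) = 0 :=
  hGSA.hasseDeriv_eval_eq_zero_of_terms_eq_zero hνℓ hs fun ν' hν' => by
    rw [hyi, zero_pow (by rw [Finset.mem_Ioc] at hν'; omega), mul_zero, zero_mul]

theorem hasseDeriv_eval_eq_zero_of_ZCRS {p : ℕ} (hp : p.Prime) [CharP F p]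
    (hGSA : GSAConstraints x y r ℓ Q) {ν : ℕ} (hZ : ZCRS p r ℓ ν) (hνℓ : ν ≤ ℓ) {s : ℕ}
    (hs : s + gval p ℓ ν < r) (i : Fin n) : (hasseDeriv s (Q ν)).eval (x i) = 0 := by
  refine hGSA.hasseDeriv_eval_eq_zero_of_terms_eq_zero hνℓ (by have := le_gval p ℓ ν; omega)
    fun t ht => ?_
  obtain ⟨hνt, htℓ⟩ := Finset.mem_Ioc.mp ht
  by_cases hdvd : p ∣ t.choose ν
  · rw [(CharP.cast_eq_zero_iff F p _).mpr hdvd, zero_mul, zero_mul]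
  · have hspoiler : t ∈ spoilerSet p ℓ ν := mem_spoilerSet.mpr ⟨hνt, htℓ, hdvd⟩
    have := gval_le_gval_of_mem_spoilerSet hp hspoiler
    rw [hasseDeriv_eval_eq_zero_of_ZCRS hp hGSA (hZ.of_mem_spoilerSet hspoiler) htℓ
      (by omega) i, mul_zero]
termination_by ℓ - ν

end GSAConstraints

theorem combined_prefactors_general {F : Type*} [Field F]
    {p : ℕ} (hp : p.Prime) [CharP F p] {n : ℕ}
    (x : Fin n → F) (hx : Function.Injective x)
    (J : Finset (Fin n)) (r ℓ k ε₀ : ℕ) (hJ : J.card = k)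
    (hrℓ : r ≤ ℓ)
    (y : Fin n → F) (hy : ∀ i ∈ J, y i = 0)
    (Q : ℕ → F[X])
    (hdeg : ∀ ν ≤ ℓ, DegLE (Q ν) (degBound r n ε₀ k ν))
    (hGSA : GSAConstraints x y r ℓ Q) :
    ∀ ν < r,
      (ZCRS p r ℓ ν → ∃ W : F[X],
        DegLE W (degBound r n ε₀ k ν - (k : ℤ) * ((r : ℤ) - (ν : ℤ)) -
          ((n : ℤ) - (k : ℤ)) * ((r : ℤ) - (gval p ℓ ν : ℤ))) ∧
        Q ν = W * (Ppoly x J) ^ (r - ν) *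
          (Ppoly x (Finset.univ \ J)) ^ (r - gval p ℓ ν)) ∧
      (¬ ZCRS p r ℓ ν → ∃ U : F[X],
        DegLE U (degBound r n ε₀ k ν - (k : ℤ) * ((r : ℤ) - (ν : ℤ))) ∧
        Q ν = U * (Ppoly x J) ^ (r - ν)) := by
  intro ν hν
  have hνℓ : ν ≤ ℓ := by omega
  have hJdvd : Ppoly x J ^ (r - ν) ∣ Q ν := Ppoly_pow_dvd_of_hasseDeriv_eval_eq_zero hx
    fun i hi s hs => hGSA.hasseDeriv_eval_eq_zero_of_eq_zero (hy i hi) hνℓ (by omega)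
  refine ⟨fun hZ => ?_, fun _ => ?_⟩
  · have hg := hZ.gval_lt
    have hcard : (Finset.univ \ J).card = n - k := by
      rw [Finset.card_sdiff_of_subset J.subset_univ, Finset.card_univ, Fintype.card_fin, hJ]
    have hkn : k ≤ n := hJ ▸ J.card_le_univ.trans_eq (Fintype.card_fin n)
    have hrest : Ppoly x (Finset.univ \ J) ^ (r - gval p ℓ ν) ∣ Q ν :=
      Ppoly_pow_dvd_of_hasseDeriv_eval_eq_zero hx fun i _ s hs =>
        hGSA.hasseDeriv_eval_eq_zero_of_ZCRS hp hZ hνℓ (by omega) i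
    obtain ⟨W, hW, hQ⟩ := (hdeg ν hνℓ).exists_eq_mul_of_dvd
      (((Ppoly_monic x _).pow _).mul ((Ppoly_monic x _).pow _))
      ((isCoprime_Ppoly hx Finset.disjoint_sdiff).pow.mul_dvd hJdvd hrest)
    refine ⟨W, ?_, by rw [hQ, mul_assoc]⟩
    rwa [((Ppoly_monic x _).pow _).natDegree_mul ((Ppoly_monic x _).pow _),
      natDegree_Ppoly_pow, natDegree_Ppoly_pow, hJ, hcard, Nat.cast_add, Nat.cast_mul,
      Nat.cast_mul, Nat.cast_sub hν.le, Nat.cast_sub hg.le, Nat.cast_sub hkn, ← sub_sub,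
      mul_comm _ (k : ℤ), mul_comm _ ((n : ℤ) - k)] at hW
  · obtain ⟨U, hU, hQ⟩ := (hdeg ν hνℓ).exists_eq_mul_of_dvd ((Ppoly_monic x J).pow _) hJdvd
    refine ⟨U, ?_, hQ⟩
    rwa [natDegree_Ppoly_pow, hJ, Nat.cast_mul, Nat.cast_sub hν.le, mul_comm] at hU

/-- combined re-encoding and Sierpinski prefactors: if `y` vanishes on
`J` with `|J| = k` and the `Q ν` satisfy the GSA interpolation constraints with degree
bounds `d_ν`, then for every `ν < r`: if `ν` is a zero column with resolvable spoilers,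
`Q ν = W · P_J^(r−ν) · P_{I∖J}^(r−g(ν))` with
`deg W ≤ d_ν − k(r−ν) − (n−k)(r−g(ν))`; otherwise `Q ν = U · P_J^(r−ν)` with
`deg U ≤ d_ν − k(r−ν)`. -/
theorem combined_prefactors {F : Type*} [Field F] [Fintype F]
    {p : ℕ} (hp : p.Prime) [CharP F p] {n : ℕ}
    (x : Fin n → F) (hx : Function.Injective x)
    (J : Finset (Fin n)) (r ℓ k ε₀ : ℕ) (hJ : J.card = k)
    (hr : 0 < r) (hrℓ : r ≤ ℓ)
    (y : Fin n → F) (hy : ∀ i ∈ J, y i = 0)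
    (Q : ℕ → F[X])
    (hdeg : ∀ ν ≤ ℓ, DegLE (Q ν) (degBound r n ε₀ k ν))
    (hGSA : GSAConstraints x y r ℓ Q) :
    ∀ ν < r,
      (ZCRS p r ℓ ν → ∃ W : F[X],
        DegLE W (degBound r n ε₀ k ν - (k : ℤ) * ((r : ℤ) - (ν : ℤ)) -
          ((n : ℤ) - (k : ℤ)) * ((r : ℤ) - (gval p ℓ ν : ℤ))) ∧
        Q ν = W * (Ppoly x J) ^ (r - ν) *
          (Ppoly x (Finset.univ \ J)) ^ (r - gval p ℓ ν)) ∧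
      (¬ ZCRS p r ℓ ν → ∃ U : F[X],
        DegLE U (degBound r n ε₀ k ν - (k : ℤ) * ((r : ℤ) - (ν : ℤ))) ∧
        Q ν = U * (Ppoly x J) ^ (r - ν)) :=
  combined_prefactors_general hp x hx J r ℓ k ε₀ hJ hrℓ y hy Q hdeg hGSA
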